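/- arXiv:2110.13116 — 4 statements merged into one kernel-verified Lean document; each statement's English description precedes it below -/
import Mathlib

section
/- Fix ρ > 1 and τ > 1, and define for μ ∈ [0, 1/τ) the value T(μ) as the projection of τ-1 onto the interval [ln((ρ-2μ)/(μτ+ρ-μ-1)), ln((ρ-μ)/(μτ+ρ-μ-1))] (assumed nonempty). Then μ ↦ T(μ) is non-increasing. -/
/-!
Write `d(μ) = μτ + ρ - μ - 1 = μ(τ - 1) + (ρ - 1) > 0`. For every `k ≥ 0` the ratio
`(ρ - kμ) / d(μ)` is decreasing, so both endpoints decrease wherever their logarithms are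
honest. The upper endpoint is moreover `≥ 0` because `μτ < 1`. The lower endpoint is a
junk value `log |ρ - 2μ| - log d(μ)` once `2μ ≥ ρ`; nonemptiness of the interval just below
`1/τ` forces `3 ≤ 2ρτ`, and this makes the junk value `≤ 0`, hence below the clamped upper
endpoint at every smaller `μ`.
-/

open Real

section

variable {ρ τ : ℝ}

theorem max_min_le_max_min {α : Type*} [LinearOrder α] {l₁ l₂ u₁ u₂ : α} (c : α)
    (hu : u₂ ≤ u₁) (hl : l₂ ≤ max l₁ (min c u₁)) : max l₂ (min c u₂) ≤ max l₁ (min c u₁) :=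
  max_le hl ((min_le_min_left c hu).trans (le_max_right _ _))

theorem denom_pos (hρ : 1 < ρ) (hτ : 1 ≤ τ) {μ : ℝ} (hμ : 0 ≤ μ) : 0 < μ * τ + ρ - μ - 1 := by
  nlinarith

/-- Cross-multiplied, the difference is `(a - b) (k(ρ - 1) + ρ(τ - 1))`. -/
theorem ratio_antitoneOn (hρ : 1 < ρ) (hτ : 1 ≤ τ) {k : ℝ} (hk : 0 ≤ k) :
    AntitoneOn (fun μ : ℝ => (ρ - k * μ) / (μ * τ + ρ - μ - 1)) (Set.Ici 0) := by
  intro a ha b hb hab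
  rw [div_le_div_iff₀ (denom_pos hρ hτ hb) (denom_pos hρ hτ ha)]
  have : 0 ≤ k * (ρ - 1) + ρ * (τ - 1) := by nlinarith
  nlinarith [mul_nonneg (sub_nonneg.mpr hab) this]

theorem log_upper_antitone (hρ : 1 < ρ) (hτ : 1 ≤ τ) {a b : ℝ} (ha : 0 ≤ a) (hab : a ≤ b)
    (hb : b < ρ) :
    log ((ρ - b) / (b * τ + ρ - b - 1)) ≤ log ((ρ - a) / (a * τ + ρ - a - 1)) := by
  refine log_le_log (div_pos (by linarith) (denom_pos hρ hτ (ha.trans hab))) ?_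
  simpa using ratio_antitoneOn hρ hτ zero_le_one ha (Set.mem_Ici.mpr (ha.trans hab)) hab

theorem log_upper_nonneg (hρ : 1 < ρ) (hτ : 1 ≤ τ) {μ : ℝ} (hμ : 0 ≤ μ) (hμτ : μ * τ ≤ 1) :
    0 ≤ log ((ρ - μ) / (μ * τ + ρ - μ - 1)) := by
  apply log_nonneg
  rw [one_le_div (denom_pos hρ hτ hμ)]
  linarith

theorem log_lower_nonpos_of_le_two_mul (hρ : 1 < ρ) (hτ : 1 ≤ τ) (hρτ : 3 ≤ 2 * ρ * τ)
    {μ : ℝ} (hμ : 0 ≤ μ) (hμτ : μ * τ < 1) (hμρ : ρ ≤ 2 * μ) :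
    log ((ρ - 2 * μ) / (μ * τ + ρ - μ - 1)) ≤ 0 := by
  have hd := denom_pos hρ hτ hμ
  rw [← log_abs, abs_div, abs_of_nonpos (by linarith), abs_of_pos hd]
  refine log_nonpos (div_nonneg (by linarith) hd.le) ((div_le_one hd).mpr ?_)
  nlinarith

/-- At any `μ ∈ (2ρ/3, 1/τ)` nonemptiness would give `3μ ≤ 2ρ`. -/
theorem three_le_of_log_lower_le_log_upper (hρ : 1 < ρ) (hτ : 1 < τ)
    (hne : ∀ μ ∈ Set.Ico (0:ℝ) (1 / τ),
      log ((ρ - 2 * μ) / (μ * τ + ρ - μ - 1)) ≤ log ((ρ - μ) / (μ * τ + ρ - μ - 1))) :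
    3 ≤ 2 * ρ * τ := by
  by_contra! h
  have hτ0 : 0 < τ := by linarith
  have hlt : 2 * ρ / 3 < 1 / τ := by
    rw [div_lt_div_iff₀ (by norm_num) hτ0]
    linarith
  obtain ⟨μ, hρμ, hμτ⟩ := exists_between hlt
  have hμ1 : μ < 1 := hμτ.trans ((div_lt_one hτ0).mpr hτ)
  have hd := denom_pos hρ hτ.le (by linarith : 0 ≤ μ)
  have hlog := hne μ ⟨by linarith, hμτ⟩
  rw [← log_abs, abs_div, abs_of_neg (by linarith), abs_of_pos hd,
    log_le_log_iff (div_pos (by linarith) hd) (div_pos (by linarith) hd),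
    div_le_div_iff_of_pos_right hd] at hlog
  linarith

end

theorem case3_T_antitone (ρ τ : ℝ) (hρ : 1 < ρ) (hτ : 1 < τ)
    (hne : ∀ μ ∈ Set.Ico (0:ℝ) (1 / τ),
      Real.log ((ρ - 2 * μ) / (μ * τ + ρ - μ - 1))
        ≤ Real.log ((ρ - μ) / (μ * τ + ρ - μ - 1))) :
    AntitoneOn (fun μ : ℝ =>
      max (Real.log ((ρ - 2 * μ) / (μ * τ + ρ - μ - 1)))
        (min (τ - 1) (Real.log ((ρ - μ) / (μ * τ + ρ - μ - 1)))))
      (Set.Ico (0:ℝ) (1 / τ)) := by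
  rintro a ⟨ha0, -⟩ b ⟨hb0, hb1⟩ hab
  have hτ0 : 0 < τ := by linarith
  have hbτ : b * τ < 1 := (lt_div_iff₀ hτ0).mp (by simpa using hb1)
  have hb_lt_one : b < 1 := hb1.trans ((div_lt_one hτ0).mpr hτ)
  refine max_min_le_max_min _ (log_upper_antitone hρ hτ.le ha0 hab (by linarith)) ?_
  rcases lt_or_ge 0 (ρ - 2 * b) with hpos | hjunk
  · refine le_max_of_le_left (log_le_log (div_pos hpos (denom_pos hρ hτ.le hb0)) ?_)
    exact ratio_antitoneOn hρ hτ.le zero_le_two ha0 (Set.mem_Ici.mpr hb0) hab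
  · have hl := log_lower_nonpos_of_le_two_mul hρ hτ.le
      (three_le_of_log_lower_le_log_upper hρ hτ hne) hb0 hbτ (by linarith)
    have hu := log_upper_nonneg hρ hτ.le ha0
      ((mul_le_mul_of_nonneg_right hab hτ0.le).trans hbτ.le)
    exact le_max_of_le_right (le_min (by linarith) (hl.trans hu))
end

section
/- Suppose F and G are continuous CDFs of buying times for unit-cost ski rental with F(t) = G(t) for all t ≤ y, and G(t) > F(t) for all t ∈ (y, y'] where y' - y < 1. Let z ∈ (y, y'] maximize G(z) - F(z). Then the expected cost when the season ends at time z satisfies cost_G(z) > cost_F(z), where cost_H(x) = ∫₀^x (1+t) dH(t) + x(1 - H(x)). -/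
/-!
By the layer-cake formula, `∫_{[0,x]} t dH(t) = ∫₀ˣ (H x - H s) ds`, so
`skiCost H x = x + H x - ∫₀ˣ H` for every CDF `H` vanishing on the negative reals.
Hence with `D = G - F`, `skiCost G z - skiCost F z = D z - ∫₀ᶻ D`. Since `D` vanishes up to `y`
and is at most `D z` on `(y, z]`, `∫₀ᶻ D ≤ (z - y) D z < D z` because `z - y < 1`.
-/

open Real MeasureTheory

/-- Expected cost of a unit-cost ski rental algorithm whose buying time has
CDF `H`, when the season ends at time `x`: buying at time `t ≤ x` costs `1+t`,
and otherwise rent `x` is paid. -/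
noncomputable def skiCost (H : StieltjesFunction ℝ) (x : ℝ) : ℝ :=
  (∫ t in Set.Icc (0:ℝ) x, (1 + t) ∂H.measure) + x * (1 - H x)

open Set Filter Topology

theorem StieltjesFunction.measureReal_Icc_zero (H : StieltjesFunction ℝ)
    (hneg : ∀ t < (0 : ℝ), H t = 0) {z : ℝ} (hz : 0 ≤ z) :
    H.measure.real (Icc 0 z) = H z := by
  have hleft : Function.leftLim H 0 = 0 :=
    leftLim_eq_of_tendsto <| tendsto_const_nhds.congr'
      (eventually_nhdsWithin_of_forall fun t ht => (hneg t ht).symm)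
  have hHz : 0 ≤ H z := hneg (-1) (by norm_num) ▸ H.mono (by linarith)
  rw [measureReal_def, H.measure_Icc, hleft, sub_zero, ENNReal.toReal_ofReal hHz]

theorem StieltjesFunction.setIntegral_id_Icc_zero (H : StieltjesFunction ℝ) {z : ℝ}
    (hz : 0 ≤ z) : ∫ t in Icc 0 z, t ∂H.measure = ∫ s in 0..z, (H z - H s) := by
  have hint : IntegrableOn (fun t : ℝ => t) (Icc 0 z) H.measure := continuous_id.integrableOn_Icc
  have hnn : 0 ≤ᵐ[H.measure.restrict (Icc 0 z)] fun t : ℝ => t :=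
    (ae_restrict_iff' measurableSet_Icc).2 (Eventually.of_forall fun t ht => ht.1)
  have htail : ∀ t ∈ Ioi (0 : ℝ), (H.measure.restrict (Icc 0 z)).real {a | t < a}
      = (Ioc 0 z).indicator (fun s => H z - H s) t := by
    intro t ht
    change (H.measure.restrict (Icc 0 z)).real (Ioi t) = _
    have hinter : Ioi t ∩ Icc 0 z = Ioc t z := by
      ext a
      simp only [mem_inter_iff, mem_Ioi, mem_Icc, mem_Ioc]
      exact ⟨fun h => ⟨h.1, h.2.2⟩, fun h => ⟨h.1, (le_of_lt ht).trans h.1.le, h.2⟩⟩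
    rw [measureReal_restrict_apply _root_.measurableSet_Ioi, hinter, measureReal_def,
      H.measure_Ioc, ENNReal.toReal_ofReal']
    by_cases htz : t ≤ z
    · rw [indicator_of_mem (show t ∈ Ioc 0 z from ⟨ht, htz⟩),
        max_eq_left (sub_nonneg.2 (H.mono htz))]
    · rw [indicator_of_notMem fun h => htz h.2,
        max_eq_right (sub_nonpos.2 (H.mono (not_le.1 htz).le))]
  rw [hint.integral_eq_integral_meas_lt hnn, setIntegral_congr_fun _root_.measurableSet_Ioi htail,
    setIntegral_indicator measurableSet_Ioc, inter_eq_right.2 Ioc_subset_Ioi_self,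
    intervalIntegral.integral_of_le hz]

theorem skiCost_eq_sub_integral (H : StieltjesFunction ℝ) (hneg : ∀ t < (0 : ℝ), H t = 0)
    {z : ℝ} (hz : 0 ≤ z) : skiCost H z = z + H z - ∫ s in 0..z, H s := by
  have hint_one : IntegrableOn (fun _ : ℝ => (1 : ℝ)) (Icc 0 z) H.measure :=
    continuous_const.integrableOn_Icc
  have hint_id : IntegrableOn (fun t : ℝ => t) (Icc 0 z) H.measure :=
    continuous_id.integrableOn_Icc
  rw [skiCost, integral_add hint_one hint_id, setIntegral_const, H.measureReal_Icc_zero hneg hz,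
    H.setIntegral_id_Icc_zero hz,
    intervalIntegral.integral_sub intervalIntegrable_const H.mono.intervalIntegrable,
    intervalIntegral.integral_const, smul_eq_mul, smul_eq_mul]
  ring

theorem intervalIntegral_le_sub_mul_of_eq_zero_of_le {D : ℝ → ℝ} {y z : ℝ}
    (hint : IntervalIntegrable D volume 0 z) (hyz : y ≤ z) (hz : 0 ≤ z)
    (hzero : ∀ s ≤ y, D s = 0) (hle : ∀ s ∈ Ioc y z, D s ≤ D z) (hDz : 0 ≤ D z) :
    ∫ s in 0..z, D s ≤ (z - y) * D z := by
  set a := max y 0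
  have haz : a ≤ z := max_le hyz hz
  have hint_left : IntervalIntegrable D volume 0 a :=
    hint.mono_set (uIcc_subset_uIcc_left (by simp [uIcc_of_le hz, a, haz]))
  have hint_right : IntervalIntegrable D volume a z :=
    hint.mono_set (uIcc_subset_uIcc_right (by simp [uIcc_of_le hz, a, haz]))
  have hleft : ∫ s in 0..a, D s = 0 := by
    rw [intervalIntegral.integral_of_le (le_max_right y 0)]
    exact setIntegral_eq_zero_of_forall_eq_zero fun s hs =>
      hzero s ((le_max_iff.1 hs.2).resolve_right hs.1.not_ge)
  have hright : ∫ s in a..z, D s ≤ (z - a) * D z := by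
    calc ∫ s in a..z, D s ≤ ∫ _ in a..z, D z :=
          intervalIntegral.integral_mono_on haz hint_right intervalIntegrable_const fun s hs =>
            (le_or_gt s y).elim (fun hsy => hzero s hsy ▸ hDz) fun hsy => hle s ⟨hsy, hs.2⟩
      _ = (z - a) * D z := by rw [intervalIntegral.integral_const, smul_eq_mul]
  rw [← intervalIntegral.integral_add_adjacent_intervals hint_left hint_right, hleft, zero_add]
  exact hright.trans (mul_le_mul_of_nonneg_right (by linarith [le_max_left y 0]) hDz)

theorem cdf_above_has_higher_cost_general (F G : StieltjesFunction ℝ)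
    (hFneg : ∀ t < (0:ℝ), F t = 0) (hGneg : ∀ t < (0:ℝ), G t = 0)
    (y y' z : ℝ) (hlen : y' - y < 1)
    (heq : ∀ t ≤ y, F t = G t)
    (hgt : ∀ t ∈ Set.Ioc y y', F t < G t)
    (hz : z ∈ Set.Ioc y y')
    (hzmax : ∀ t ∈ Set.Ioc y y', G t - F t ≤ G z - F z) :
    skiCost F z < skiCost G z := by
  obtain ⟨hyz, hzy'⟩ := hz
  have hD : 0 < G z - F z := sub_pos.2 (hgt z ⟨hyz, hzy'⟩)
  have hz0 : 0 ≤ z := by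
    by_contra! h
    linarith [hFneg z h, hGneg z h]
  have hint : ∫ s in 0..z, (G s - F s) ≤ (z - y) * (G z - F z) :=
    intervalIntegral_le_sub_mul_of_eq_zero_of_le
      (G.mono.intervalIntegrable.sub F.mono.intervalIntegrable) hyz.le hz0
      (fun s hs => sub_eq_zero.2 (heq s hs).symm)
      (fun s hs => hzmax s ⟨hs.1, hs.2.trans hzy'⟩) hD.le
  have hgap : (z - y) * (G z - F z) < G z - F z := mul_lt_of_lt_one_left hD (by linarith)
  rw [intervalIntegral.integral_sub G.mono.intervalIntegrable F.mono.intervalIntegrable] at hint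
  rw [skiCost_eq_sub_integral F hFneg hz0, skiCost_eq_sub_integral G hGneg hz0]
  linarith

theorem cdf_above_has_higher_cost (F G : StieltjesFunction ℝ)
    (hFcont : Continuous F) (hGcont : Continuous G)
    (hFneg : ∀ t < (0:ℝ), F t = 0) (hGneg : ∀ t < (0:ℝ), G t = 0)
    (hF1 : ∀ t, F t ≤ 1) (hG1 : ∀ t, G t ≤ 1)
    (y y' z : ℝ) (hyy' : y < y') (hlen : y' - y < 1)
    (heq : ∀ t ≤ y, F t = G t)
    (hgt : ∀ t ∈ Set.Ioc y y', F t < G t)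
    (hz : z ∈ Set.Ioc y y')
    (hzmax : ∀ t ∈ Set.Ioc y y', G t - F t ≤ G z - F z) :
    skiCost F z < skiCost G z :=
  cdf_above_has_higher_cost_general F G hFneg hGneg y y' z hlen heq hgt hz hzmax
end

section
/- Suppose F and G are CDFs of buying times for unit-cost ski rental with G(t) < F(t) for all t ∈ (y, z) and G(z) = F(z), where all buying by F and G before time y incurs identical expected cost. Then cost_G(z) > cost_F(z), where cost_H(x) = ∫₀^x (1+t) dH(t) + x(1 - H(x)). -/
open Real MeasureTheory

/-! For a continuous CDF `H` supported on `[0, ∞)`, integrating by parts gives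
`skiCost H z = H z + z - ∫₀ᶻ H`. Since `G z = F z`, the two costs differ by `∫₀ᶻ (F - G)`,
which is positive because `G ≤ F` on `[0, z]`, strictly on `(y, z)`. -/

namespace StieltjesFunction

variable (H : StieltjesFunction ℝ)

theorem measure_singleton_of_continuous (hc : Continuous H) (a : ℝ) : H.measure {a} = 0 := by
  rw [measure_singleton, hc.continuousWithinAt.leftLim_eq, sub_self, ENNReal.ofReal_zero]

theorem measure_Icc_of_continuous (hc : Continuous H) (a b : ℝ) :
    H.measure (Set.Icc a b) = ENNReal.ofReal (H b - H a) := by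
  rw [measure_Icc, hc.continuousWithinAt.leftLim_eq]

/-- Layer cake: `∫_(0,z] t dH(t) = ∫₀ᶻ H.measure [s, z] ds`. -/
theorem setIntegral_Ioc_zero_id (hc : Continuous H) {z : ℝ} (hz : 0 ≤ z) :
    ∫ t in Set.Ioc 0 z, t ∂H.measure = z * H z - ∫ s in (0:ℝ)..z, H s := by
  have hfin : IsFiniteMeasure (H.measure.restrict (Set.Ioc 0 z)) :=
    isFiniteMeasure_restrict.mpr measure_Ioc_lt_top.ne
  have hlayer : ∫ t in Set.Ioc 0 z, t ∂H.measure
      = ∫ s in Set.Ioc 0 z, (H.measure.restrict (Set.Ioc 0 z)).real (Set.Ici s) :=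
    continuous_id'.integrableOn_Ioc.integral_eq_integral_Ioc_meas_le
      (ae_restrict_of_forall_mem measurableSet_Ioc fun t ht => ht.1.le)
      (ae_restrict_of_forall_mem measurableSet_Ioc fun t ht => ht.2)
  have hlevel : ∀ s ∈ Set.Ioc (0:ℝ) z,
      (H.measure.restrict (Set.Ioc 0 z)).real (Set.Ici s) = H z - H s := by
    intro s hs
    have hset : Set.Ici s ∩ Set.Ioc 0 z = Set.Icc s z := by
      ext t
      simp only [Set.mem_inter_iff, Set.mem_Ici, Set.mem_Ioc, Set.mem_Icc]
      exact ⟨fun h => ⟨h.1, h.2.2⟩, fun h => ⟨h.1, hs.1.trans_le h.1, h.2⟩⟩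
    rw [measureReal_def, Measure.restrict_apply measurableSet_Ici, hset,
      H.measure_Icc_of_continuous hc, ENNReal.toReal_ofReal (sub_nonneg.mpr (H.mono hs.2))]
  rw [hlayer, setIntegral_congr_fun measurableSet_Ioc hlevel,
    integral_sub (integrable_const _) hc.integrableOn_Ioc, setIntegral_const, smul_eq_mul,
    Real.volume_real_Ioc_of_le hz, sub_zero, intervalIntegral.integral_of_le hz]

end StieltjesFunction

theorem skiCost_eq_of_continuous (H : StieltjesFunction ℝ) (hc : Continuous H)
    (hneg : ∀ t < (0:ℝ), H t = 0) {z : ℝ} (hz : 0 ≤ z) : skiCost H z = H z + z - ∫ t in (0:ℝ)..z, H t := by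
  have hH0 : H 0 = 0 :=
    Set.EqOn.closure (g := 0) hneg hc continuous_const (closure_Iio (0:ℝ) ▸ Set.self_mem_Iic)
  have hmass : H.measure.real (Set.Ioc 0 z) = H z := by
    rw [measureReal_def, H.measure_Ioc, hH0, sub_zero, ENNReal.toReal_ofReal (hH0 ▸ H.mono hz)]
  have hfin : IsFiniteMeasure (H.measure.restrict (Set.Ioc 0 z)) :=
    isFiniteMeasure_restrict.mpr measure_Ioc_lt_top.ne
  rw [skiCost, integral_Icc_eq_integral_Ioc' (H.measure_singleton_of_continuous hc 0),
    integral_add (integrable_const 1) continuous_id'.integrableOn_Ioc, setIntegral_const, hmass,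
    smul_eq_mul, mul_one, H.setIntegral_Ioc_zero_id hc hz]
  ring

theorem delayed_cdf_has_higher_cost_general (F G : StieltjesFunction ℝ)
    (hFcont : Continuous F) (hGcont : Continuous G)
    (hFneg : ∀ t < (0:ℝ), F t = 0) (hGneg : ∀ t < (0:ℝ), G t = 0)
    (y z : ℝ) (hyz : y < z)
    (heq : ∀ t ≤ y, F t = G t)
    (hlt : ∀ t ∈ Set.Ioo y z, G t < F t)
    (hzeq : G z = F z) :
    skiCost F z < skiCost G z := by
  have hm : (y + z) / 2 ∈ Set.Ioo y z := ⟨by linarith, by linarith⟩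
  have hm0 : 0 ≤ (y + z) / 2 := by
    by_contra! h
    simpa [hFneg _ h, hGneg _ h] using hlt _ hm
  have hz : 0 < z := hm0.trans_lt hm.2
  have hGF : ∀ t ∈ Set.Ioc 0 z, G t ≤ F t := by
    rintro t ⟨-, htz⟩
    rcases le_or_gt t y with hty | hyt
    · exact (heq t hty).ge
    rcases htz.lt_or_eq with htz | rfl
    · exact (hlt t ⟨hyt, htz⟩).le
    · exact hzeq.le
  have hint : ∫ t in (0:ℝ)..z, G t < ∫ t in (0:ℝ)..z, F t :=
    intervalIntegral.integral_lt_integral_of_continuousOn_of_le_of_exists_lt hz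
      hGcont.continuousOn hFcont.continuousOn hGF ⟨_, ⟨hm0, hm.2.le⟩, hlt _ hm⟩
  rw [skiCost_eq_of_continuous F hFcont hFneg hz.le, skiCost_eq_of_continuous G hGcont hGneg hz.le,
    hzeq]
  linarith

theorem delayed_cdf_has_higher_cost (F G : StieltjesFunction ℝ)
    (hFcont : Continuous F) (hGcont : Continuous G)
    (hFneg : ∀ t < (0:ℝ), F t = 0) (hGneg : ∀ t < (0:ℝ), G t = 0)
    (hF1 : ∀ t, F t ≤ 1) (hG1 : ∀ t, G t ≤ 1)
    (y z : ℝ) (hyz : y < z)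
    (heq : ∀ t ≤ y, F t = G t)
    (hlt : ∀ t ∈ Set.Ioo y z, G t < F t)
    (hzeq : G z = F z) :
    skiCost F z < skiCost G z :=
  delayed_cdf_has_higher_cost_general F G hFcont hGcont hFneg hGneg y z hyz heq hlt hzeq
end

section
/- Let k ≥ 1, with α₀ > ⋯ > α_k ≥ 0, 0 = β₀ < ⋯ < β_k, breakpoints t_j = (β_j-β_{j-1})/(α_{j-1}-α_j) with t_1 < ⋯ < t_k, and let ℓ ∈ [t_{j*}, t_{j*+1}). Suppose nonneg random variables A_1 ≤ ⋯ ≤ A_k satisfy, for each j, E[(β_j-β_{j-1})·1_{A_j ≤ ℓ} + (α_{j-1}-α_j)·min{A_j, ℓ}] ≤ ρ·min{(α_{j-1}-α_j)ℓ, β_j-β_{j-1}} + μ(α_{j-1}-α_j)|τ-ℓ|. Then the quantity C = β_J + Σ_{j=1}^{J}(A_j - A_{j-1})α_{j-1} + (ℓ - A_J)α_J, with J = max{j : A_j ≤ ℓ} and A₀ = 0, satisfies E[C] ≤ ρ(α_{j*}ℓ + β_{j*}) + μ(α₀ - α_k)|τ - ℓ| when ρ ≥ 1. -/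
/-!
Decompose the idle period into the `k` ski-rental problems "rent at rate `α (j-1) - α j` or buy at
price `β j - β (j-1)`", the `j`-th of which buys at time `A j`. The DPM cost telescopes into
`α k * ℓ` plus the sum of the ski-rental costs, so by linearity of expectation and the
per-problem guarantee its expectation is at most `α k * ℓ + ρ * Σⱼ min (rent, buy) + μ-terms`.
Bounding the minimum by the buying price for `j ≤ jstar` and by the rent otherwise gives
`Σⱼ min ≤ β jstar + (α jstar - α k) * ℓ`, and `ρ ≥ 1` absorbs the remaining `α k * ℓ`.
-/

open Real MeasureTheory Finset

/-- The cost of a ski-rental problem with rent rate `r` and buying price `b`, over a season of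
length `ℓ`, of the strategy that buys at time `a`. -/
noncomputable def skiRentalCost (r b ℓ a : ℝ) : ℝ :=
  (if a ≤ ℓ then b else 0) + r * min a ℓ

lemma exists_le_iff_le_of_monotone {α : Type*} [Preorder α] {a : ℕ → α} (ha : Monotone a)
    {ℓ : α} (h0 : a 0 ≤ ℓ) (k : ℕ) : ∃ J ≤ k, ∀ j ≤ k, a j ≤ ℓ ↔ j ≤ J := by
  classical
  refine ⟨Nat.findGreatest (a · ≤ ℓ) k, Nat.findGreatest_le k, fun j hj => ⟨?_, ?_⟩⟩
  · exact Nat.le_findGreatest (P := (a · ≤ ℓ)) hj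
  · exact fun hjJ => (ha hjJ).trans <|
      Nat.findGreatest_spec (P := fun j => a j ≤ ℓ) (Nat.zero_le k) h0

lemma sum_range_sub_mul {R : Type*} [CommRing R] (a α : ℕ → R) (n : ℕ) :
    ∑ j ∈ range n, (a (j + 1) - a j) * α j
      = a n * α n - a 0 * α 0 + ∑ j ∈ range n, (α j - α (j + 1)) * a (j + 1) := by
  rw [← sum_range_sub (fun j => a j * α j), ← sum_add_distrib]
  exact sum_congr rfl fun j _ => by ring

lemma sum_Ico_sub' {R : Type*} [AddCommGroup R] (f : ℕ → R) {m n : ℕ} (hmn : m ≤ n) :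
    ∑ j ∈ Ico m n, (f j - f (j + 1)) = f m - f n := by
  rw [← neg_sub, ← sum_Ico_sub f hmn, ← sum_neg_distrib]
  simp only [neg_sub]

/-- The left side is the DPM cost when state `j + 1` is entered at time `a (j + 1)` and exactly
the first `J` transitions happen before the end `ℓ` of the idle period. -/
lemma cost_eq_sum_skiRentalCost (α β a : ℕ → ℝ) (ℓ : ℝ) {k J : ℕ} (hJk : J ≤ k)
    (hβ0 : β 0 = 0) (ha0 : a 0 = 0) (hJ : ∀ j ≤ k, a j ≤ ℓ ↔ j ≤ J) :
    β J + ∑ j ∈ range J, (a (j + 1) - a j) * α j + (ℓ - a J) * α J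
      = α k * ℓ +
          ∑ j ∈ range k, skiRentalCost (α j - α (j + 1)) (β (j + 1) - β j) ℓ (a (j + 1)) := by
  have before : ∀ j ∈ range J, skiRentalCost (α j - α (j + 1)) (β (j + 1) - β j) ℓ (a (j + 1))
      = (β (j + 1) - β j) + (α j - α (j + 1)) * a (j + 1) := by
    intro j hj
    rw [mem_range] at hj
    have hle : a (j + 1) ≤ ℓ := (hJ _ (by omega)).2 hj
    rw [skiRentalCost, if_pos hle, min_eq_left hle]
  have after : ∀ j ∈ Ico J k, skiRentalCost (α j - α (j + 1)) (β (j + 1) - β j) ℓ (a (j + 1))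
      = (α j - α (j + 1)) * ℓ := by
    intro j hj
    rw [mem_Ico] at hj
    have hgt : ℓ < a (j + 1) := not_le.mp fun hle => by have := (hJ _ hj.2).1 hle; omega
    rw [skiRentalCost, if_neg hgt.not_ge, min_eq_right hgt.le, zero_add]
  rw [← sum_range_add_sum_Ico _ hJk, sum_congr rfl before, sum_congr rfl after, sum_add_distrib,
    sum_range_sub, ← sum_mul, sum_Ico_sub' α hJk, sum_range_sub_mul, hβ0, ha0]
  ring

lemma sum_min_rent_buy_le (α β : ℕ → ℝ) (ℓ : ℝ) {k jstar : ℕ} (hjk : jstar ≤ k) :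
    ∑ j ∈ range k, min ((α j - α (j + 1)) * ℓ) (β (j + 1) - β j)
      ≤ β jstar - β 0 + (α jstar - α k) * ℓ := by
  rw [← sum_range_add_sum_Ico _ hjk, ← sum_range_sub β, ← sum_Ico_sub' α hjk, sum_mul]
  exact add_le_add (sum_le_sum fun j _ => min_le_right _ _)
    (sum_le_sum fun j _ => min_le_left _ _)

theorem dpm_single_period_competitive_general
    {Ω : Type*} [MeasureSpace Ω]
    (hprob : IsProbabilityMeasure (volume : Measure Ω))
    (k : ℕ) (α β : ℕ → ℝ) (ℓ τ ρ μ : ℝ) (jstar : ℕ)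
    (hαk : 0 ≤ α k)
    (hβ0 : β 0 = 0)
    (hℓ : 0 ≤ ℓ)
    (hj1 : jstar ≤ k)
    (hρ : 1 ≤ ρ)
    (A : ℕ → Ω → ℝ)
    (hA0 : ∀ ω, A 0 ω = 0)
    (hAmono : ∀ j ω, A j ω ≤ A (j + 1) ω)
    (hcompint : ∀ j, 1 ≤ j → j ≤ k →
      Integrable (fun ω => (if A j ω ≤ ℓ then β j - β (j - 1) else 0)
        + (α (j - 1) - α j) * min (A j ω) ℓ))
    (hcomp : ∀ j, 1 ≤ j → j ≤ k →
      (∫ ω, ((if A j ω ≤ ℓ then β j - β (j - 1) else 0)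
          + (α (j - 1) - α j) * min (A j ω) ℓ))
        ≤ ρ * min ((α (j - 1) - α j) * ℓ) (β j - β (j - 1))
          + μ * (α (j - 1) - α j) * |τ - ℓ|)
    (C : Ω → ℝ)
    (hC : ∀ (ω : Ω) (J : ℕ), J ≤ k → A J ω ≤ ℓ →
      (∀ j ≤ k, A j ω ≤ ℓ → j ≤ J) →
      C ω = β J + (∑ j ∈ Finset.range J, (A (j + 1) ω - A j ω) * α j)
        + (ℓ - A J ω) * α J) :
    (∫ ω, C ω) ≤ ρ * (α jstar * ℓ + β jstar) + μ * (α 0 - α k) * |τ - ℓ| := by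
  set X : ℕ → Ω → ℝ := fun j ω => skiRentalCost (α j - α (j + 1)) (β (j + 1) - β j) ℓ (A (j + 1) ω)
  have hC_eq : C = fun ω => α k * ℓ + ∑ j ∈ range k, X j ω := by
    funext ω
    obtain ⟨J, hJk, hJ⟩ := exists_le_iff_le_of_monotone (monotone_nat_of_le_succ (hAmono · ω))
      (hA0 ω ▸ hℓ) k
    rw [hC ω J hJk ((hJ J hJk).2 le_rfl) fun j hj => (hJ j hj).1]
    exact cost_eq_sum_skiRentalCost α β (A · ω) ℓ hJk hβ0 (hA0 ω) hJ
  have hX_int : ∀ j ∈ range k, Integrable (X j) := fun j hj => by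
    simpa only [X, skiRentalCost, Nat.add_sub_cancel] using
      hcompint (j + 1) j.succ_pos (mem_range.mp hj)
  have hX_le : ∀ j ∈ range k, ∫ ω, X j ω ≤ ρ * min ((α j - α (j + 1)) * ℓ) (β (j + 1) - β j)
      + μ * (α j - α (j + 1)) * |τ - ℓ| := fun j hj => by
    simpa only [X, skiRentalCost, Nat.add_sub_cancel] using
      hcomp (j + 1) j.succ_pos (mem_range.mp hj)
  calc ∫ ω, C ω = α k * ℓ + ∑ j ∈ range k, ∫ ω, X j ω := by
        rw [hC_eq, integral_add (integrable_const _) (integrable_finsetSum _ hX_int),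
          integral_const, integral_finsetSum _ hX_int, probReal_univ, one_smul]
    _ ≤ α k * ℓ + ∑ j ∈ range k, (ρ * min ((α j - α (j + 1)) * ℓ) (β (j + 1) - β j)
          + μ * (α j - α (j + 1)) * |τ - ℓ|) := by gcongr with j hj; exact hX_le j hj
    _ = α k * ℓ + ρ * ∑ j ∈ range k, min ((α j - α (j + 1)) * ℓ) (β (j + 1) - β j)
          + μ * (α 0 - α k) * |τ - ℓ| := by
        rw [sum_add_distrib, ← mul_sum, ← sum_mul, ← mul_sum, sum_range_sub']
        ring
    _ ≤ α k * ℓ + ρ * (β jstar + (α jstar - α k) * ℓ) + μ * (α 0 - α k) * |τ - ℓ| := by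
        have := sum_min_rent_buy_le α β ℓ hj1
        rw [hβ0, sub_zero] at this
        gcongr
    _ ≤ ρ * (α jstar * ℓ + β jstar) + μ * (α 0 - α k) * |τ - ℓ| := by
        have : α k * ℓ ≤ ρ * (α k * ℓ) := le_mul_of_one_le_left (mul_nonneg hαk hℓ) hρ
        linarith

theorem dpm_single_period_competitive
    {Ω : Type*} [MeasureSpace Ω]
    (hprob : IsProbabilityMeasure (volume : Measure Ω))
    (k : ℕ) (hk : 1 ≤ k) (α β t : ℕ → ℝ) (ℓ τ ρ μ : ℝ) (jstar : ℕ)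
    (hα : ∀ j, j < k → α (j + 1) < α j) (hαk : 0 ≤ α k)
    (hβ0 : β 0 = 0) (hβ : ∀ j, j < k → β j < β (j + 1))
    (ht0 : t 0 = 0)
    (ht : ∀ j, 1 ≤ j → j ≤ k → t j = (β j - β (j - 1)) / (α (j - 1) - α j))
    (htmono : ∀ j, 1 ≤ j → j < k → t j < t (j + 1))
    (hℓ : 0 ≤ ℓ)
    (hj1 : jstar ≤ k) (hj2 : t jstar ≤ ℓ) (hj3 : jstar < k → ℓ < t (jstar + 1))
    (hρ : 1 ≤ ρ)
    (A : ℕ → Ω → ℝ)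
    (hA0 : ∀ ω, A 0 ω = 0)
    (hAnn : ∀ j ω, 0 ≤ A j ω)
    (hAmono : ∀ j ω, A j ω ≤ A (j + 1) ω)
    (hcompint : ∀ j, 1 ≤ j → j ≤ k →
      Integrable (fun ω => (if A j ω ≤ ℓ then β j - β (j - 1) else 0)
        + (α (j - 1) - α j) * min (A j ω) ℓ))
    (hcomp : ∀ j, 1 ≤ j → j ≤ k →
      (∫ ω, ((if A j ω ≤ ℓ then β j - β (j - 1) else 0)
          + (α (j - 1) - α j) * min (A j ω) ℓ))
        ≤ ρ * min ((α (j - 1) - α j) * ℓ) (β j - β (j - 1))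
          + μ * (α (j - 1) - α j) * |τ - ℓ|)
    (C : Ω → ℝ) (hCint : Integrable C)
    (hC : ∀ (ω : Ω) (J : ℕ), J ≤ k → A J ω ≤ ℓ →
      (∀ j ≤ k, A j ω ≤ ℓ → j ≤ J) →
      C ω = β J + (∑ j ∈ Finset.range J, (A (j + 1) ω - A j ω) * α j)
        + (ℓ - A J ω) * α J) :
    (∫ ω, C ω) ≤ ρ * (α jstar * ℓ + β jstar) + μ * (α 0 - α k) * |τ - ℓ| :=
  dpm_single_period_competitive_general hprob k α β ℓ τ ρ μ jstar hαk hβ0 hℓ hj1 hρ A hA0 hAmono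
    hcompint hcomp C hC
end
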